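/- arXiv:1312.1476 — 2 statements merged into one kernel-verified Lean document; each statement's English description precedes it below -/
import Mathlib

section
/- With the setup of the coloured Hutchinson estimator (B symmetric, 𝒞 a partition of {1,…,n}, V^c supported on class c with i.i.d. Rademacher entries), the variance of the estimator ∑_{c ∈ 𝒞} (V^c)ᵀ B V^c equals 2 ∑_{c ∈ 𝒞} ∑_{i ≠ j, i,j ∈ c} B_{ij}², which is at most the variance 2 ∑_{i≠j} B_{ij}² of the uncoloured Hutchinson estimator. -/
/-!
Put `w i = V (col i) · i`. Since `V c` vanishes off the class `c`, the coloured estimator is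
`wᵀ B̃ w`, where `B̃` keeps the entries `B i j` with `col i = col j`: it is the plain Hutchinson
estimator of `B̃` driven by the independent Rademacher vector `w`.

For a Rademacher vector the Walsh products `w_S = ∏ i ∈ S, w i` are orthonormal, because
`w_S * w_T = w_{S ∆ T}` and `E w_S = 0` unless `S = ∅`. As `w i ^ 2 = 1`, the centred estimator
is `wᵀ C w - tr C = ∑_{i ≠ j} C i j * w_{i,j}`, and the pair `{i, j}` comes from both `(i, j)` and
`(j, i)`; hence its variance is `∑_{i ≠ j} C i j * (C i j + C j i) = 2 ∑_{i ≠ j} (C i j)²`.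
Dropping the pairs of different colours can only decrease this sum.
-/

open Matrix MeasureTheory ProbabilityTheory

theorem Finset.prod_mul_prod_eq_prod_symmDiff {ι M : Type*} [DecidableEq ι] [CommMonoid M]
    {x : ι → M} {s t : Finset ι} (hx : ∀ i ∈ s ∩ t, x i * x i = 1) :
    (∏ i ∈ s, x i) * ∏ i ∈ t, x i = ∏ i ∈ symmDiff s t, x i := by
  have hinter : (∏ i ∈ s ∩ t, x i) * ∏ i ∈ s ∩ t, x i = 1 := by
    rw [← Finset.prod_mul_distrib]
    exact Finset.prod_eq_one hx
  rw [symmDiff_def, Finset.sup_eq_union, Finset.prod_union disjoint_sdiff_sdiff,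
    ← Finset.prod_inter_mul_prod_sdiff s t, ← Finset.prod_inter_mul_prod_sdiff t s,
    Finset.inter_comm t s, mul_mul_mul_comm, hinter, one_mul]

theorem Finset.pair_eq_pair_iff {α : Type*} [DecidableEq α] {a b c d : α} :
    ({a, b} : Finset α) = {c, d} ↔ a = c ∧ b = d ∨ a = d ∧ b = c := by
  rw [← Finset.coe_inj, Finset.coe_pair, Finset.coe_pair, Set.pair_eq_pair_iff]

theorem Finset.sum_offDiag_ite_pair_eq_pair {ι M : Type*} [Fintype ι] [DecidableEq ι]
    [AddCommMonoid M] {p : ι × ι} (hp : p.1 ≠ p.2) (f : ι × ι → M) :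
    ∑ q ∈ Finset.univ.offDiag, (if ({p.1, p.2} : Finset ι) = {q.1, q.2} then f q else 0) =
      f p + f p.swap := by
  have hfilter : Finset.univ.offDiag.filter
      (fun q : ι × ι => ({p.1, p.2} : Finset ι) = {q.1, q.2}) = {p, p.swap} := by
    ext ⟨i, j⟩
    simp only [Finset.mem_filter, Finset.mem_offDiag, Finset.pair_eq_pair_iff, Finset.mem_insert,
      Finset.mem_singleton, Prod.ext_iff, Prod.fst_swap, Prod.snd_swap]
    grind
  rw [← Finset.sum_filter, hfilter, Finset.sum_pair fun h => hp (congrArg Prod.fst h)]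

theorem Finset.sum_offDiag_eq_sum_sum_ite {ι M : Type*} [Fintype ι] [DecidableEq ι]
    [AddCommMonoid M] (f : ι × ι → M) :
    ∑ p ∈ Finset.univ.offDiag, f p = ∑ i, ∑ j, if i ≠ j then f (i, j) else 0 := by
  have hoff : Finset.univ.offDiag = Finset.univ.filter fun p : ι × ι => p.1 ≠ p.2 := by
    ext
    simp
  rw [hoff, Finset.sum_filter, Fintype.sum_prod_type]

theorem Matrix.dotProduct_mulVec_eq_trace_add_sum_offDiag {ι R : Type*} [Fintype ι]
    [DecidableEq ι] [CommRing R] (C : Matrix ι ι R) {x : ι → R} (hx : ∀ i, x i * x i = 1) :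
    x ⬝ᵥ C *ᵥ x = C.trace + ∑ p ∈ Finset.univ.offDiag, C p.1 p.2 * ∏ i ∈ {p.1, p.2}, x i := by
  have hsum : x ⬝ᵥ C *ᵥ x = ∑ p ∈ Finset.univ ×ˢ Finset.univ, C p.1 p.2 * (x p.1 * x p.2) := by
    simp only [dotProduct, mulVec, Finset.sum_product, Finset.mul_sum]
    exact Finset.sum_congr rfl fun i _ => Finset.sum_congr rfl fun j _ => by ring
  rw [hsum, ← Finset.diag_union_offDiag, Finset.sum_union (Finset.disjoint_diag_offDiag _),
    Finset.sum_diag]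
  congr 1
  · simp [trace, hx]
  · refine Finset.sum_congr rfl fun p hp => ?_
    rw [Finset.prod_pair (Finset.mem_offDiag.1 hp).2.2]

section Rademacher

variable {Ω ι : Type*} [MeasurableSpace Ω] {μ : Measure Ω} {ε : ι → Ω → ℝ}

theorem ProbabilityTheory.iIndepFun.integral_finsetProd_eq_prod_integral (hind : iIndepFun ε μ)
    (hmeas : ∀ i, Measurable (ε i)) (s : Finset ι) :
    ∫ ω, ∏ i ∈ s, ε i ω ∂μ = ∏ i ∈ s, ∫ ω, ε i ω ∂μ := by
  rw [← Finset.prod_coe_sort s, ← (hind.precomp (g := ((↑) : {i // i ∈ s} → ι))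
    Subtype.val_injective).integral_fun_prod_eq_prod_integral
      fun i => (hmeas i).aestronglyMeasurable]
  congr with ω
  exact (Finset.prod_coe_sort s (ε · ω)).symm

theorem ae_prod_mul_prod_eq_prod_symmDiff [DecidableEq ι]
    (hsign : ∀ i, ∀ᵐ ω ∂μ, ε i ω = 1 ∨ ε i ω = -1) (s t : Finset ι) :
    (fun ω => (∏ i ∈ s, ε i ω) * ∏ i ∈ t, ε i ω) =ᵐ[μ] fun ω => ∏ i ∈ symmDiff s t, ε i ω := by
  have hsq : ∀ᵐ ω ∂μ, ∀ i ∈ s ∩ t, ε i ω * ε i ω = 1 := by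
    refine (Filter.eventually_all_finset _).2 fun i _ => ?_
    filter_upwards [hsign i] with ω h
    rcases h with h | h <;> simp [h]
  filter_upwards [hsq] with ω h using Finset.prod_mul_prod_eq_prod_symmDiff h

theorem integrable_finsetProd [IsFiniteMeasure μ] (hmeas : ∀ i, Measurable (ε i))
    (hsign : ∀ i, ∀ᵐ ω ∂μ, ε i ω = 1 ∨ ε i ω = -1) (s : Finset ι) :
    Integrable (fun ω => ∏ i ∈ s, ε i ω) μ := by
  refine .of_bound (by fun_prop) 1 ?_
  filter_upwards [(Filter.eventually_all_finset s).2 fun i _ => hsign i] with ω h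
  rw [Real.norm_eq_abs, Finset.abs_prod]
  refine Finset.prod_le_one (fun _ _ => abs_nonneg _) fun i hi => ?_
  rcases h i hi with h | h <;> simp [h]

theorem integral_finsetProd_eq_ite [DecidableEq ι] (hind : iIndepFun ε μ)
    (hmeas : ∀ i, Measurable (ε i)) (hmean : ∀ i, ∫ ω, ε i ω ∂μ = 0) (s : Finset ι) :
    ∫ ω, ∏ i ∈ s, ε i ω ∂μ = if s = ∅ then 1 else 0 := by
  have := hind.isProbabilityMeasure
  rw [hind.integral_finsetProd_eq_prod_integral hmeas]
  split_ifs with hs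
  · simp [hs]
  · obtain ⟨i, hi⟩ := Finset.nonempty_iff_ne_empty.2 hs
    exact Finset.prod_eq_zero hi (hmean i)

theorem integral_finsetProd_mul_finsetProd [DecidableEq ι] (hind : iIndepFun ε μ)
    (hmeas : ∀ i, Measurable (ε i)) (hsign : ∀ i, ∀ᵐ ω ∂μ, ε i ω = 1 ∨ ε i ω = -1)
    (hmean : ∀ i, ∫ ω, ε i ω ∂μ = 0) (s t : Finset ι) :
    ∫ ω, (∏ i ∈ s, ε i ω) * ∏ i ∈ t, ε i ω ∂μ = if s = t then 1 else 0 := by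
  rw [integral_congr_ae (ae_prod_mul_prod_eq_prod_symmDiff hsign s t),
    integral_finsetProd_eq_ite hind hmeas hmean]
  simp only [← Finset.bot_eq_empty, symmDiff_eq_bot]

theorem integral_sq_sum_mul_finsetProd [DecidableEq ι] {κ : Type*} (hind : iIndepFun ε μ)
    (hmeas : ∀ i, Measurable (ε i)) (hsign : ∀ i, ∀ᵐ ω ∂μ, ε i ω = 1 ∨ ε i ω = -1)
    (hmean : ∀ i, ∫ ω, ε i ω ∂μ = 0) (S : Finset κ) (a : κ → ℝ) (s : κ → Finset ι) :
    ∫ ω, (∑ k ∈ S, a k * ∏ i ∈ s k, ε i ω) ^ 2 ∂μ =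
      ∑ k ∈ S, ∑ l ∈ S, if s k = s l then a k * a l else 0 := by
  have := hind.isProbabilityMeasure
  have hint : ∀ k l, Integrable (fun ω => (∏ i ∈ s k, ε i ω) * ∏ i ∈ s l, ε i ω) μ := fun k l =>
    (integrable_finsetProd hmeas hsign _).congr
      (ae_prod_mul_prod_eq_prod_symmDiff hsign (s k) (s l)).symm
  simp_rw [sq, Finset.sum_mul_sum, mul_mul_mul_comm (a _)]
  rw [integral_finsetSum _ fun k _ => integrable_finsetSum _ fun l _ => (hint k l).const_mul _]
  refine Finset.sum_congr rfl fun k _ => ?_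
  rw [integral_finsetSum _ fun l _ => (hint k l).const_mul _]
  refine Finset.sum_congr rfl fun l _ => ?_
  rw [integral_const_mul, integral_finsetProd_mul_finsetProd hind hmeas hsign hmean, mul_ite,
    mul_one, mul_zero]

theorem variance_dotProduct_mulVec_rademacher [Fintype ι] [DecidableEq ι] {C : Matrix ι ι ℝ}
    (hC : C.IsSymm) (hind : iIndepFun ε μ) (hmeas : ∀ i, Measurable (ε i))
    (hsign : ∀ i, ∀ᵐ ω ∂μ, ε i ω = 1 ∨ ε i ω = -1) (hmean : ∀ i, ∫ ω, ε i ω ∂μ = 0) :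
    Var[fun ω => (fun i => ε i ω) ⬝ᵥ C *ᵥ (fun i => ε i ω); μ] =
      2 * ∑ i, ∑ j, if i ≠ j then C i j ^ 2 else 0 := by
  have := hind.isProbabilityMeasure
  set Y : Ω → ℝ := fun ω => ∑ p ∈ Finset.univ.offDiag, C p.1 p.2 * ∏ i ∈ {p.1, p.2}, ε i ω
  have hY : (fun ω => (fun i => ε i ω) ⬝ᵥ C *ᵥ (fun i => ε i ω)) =ᵐ[μ]
      fun ω => C.trace + Y ω := by
    have hsq : ∀ᵐ ω ∂μ, ∀ i, ε i ω * ε i ω = 1 := ae_all_iff.2 fun i => by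
      filter_upwards [hsign i] with ω h
      rcases h with h | h <;> simp [h]
    filter_upwards [hsq] with ω h using C.dotProduct_mulVec_eq_trace_add_sum_offDiag h
  have hYmean : μ[Y] = 0 := by
    rw [integral_finsetSum _ fun p _ => (integrable_finsetProd hmeas hsign _).const_mul _]
    refine Finset.sum_eq_zero fun p _ => ?_
    rw [integral_const_mul, integral_finsetProd_eq_ite hind hmeas hmean,
      if_neg (Finset.insert_ne_empty _ _), mul_zero]
  rw [variance_congr hY, variance_const_add (by fun_prop),
    variance_of_integral_eq_zero (by fun_prop) hYmean,
    integral_sq_sum_mul_finsetProd hind hmeas hsign hmean]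
  calc _ = ∑ p ∈ Finset.univ.offDiag, 2 * C p.1 p.2 ^ 2 := by
        refine Finset.sum_congr rfl fun p hp => ?_
        simp_rw [← mul_ite_zero]
        rw [← Finset.mul_sum, Finset.sum_offDiag_ite_pair_eq_pair (Finset.mem_offDiag.1 hp).2.2,
          Prod.fst_swap, Prod.snd_swap, hC.apply]
        ring
    _ = 2 * ∑ i, ∑ j, if i ≠ j then C i j ^ 2 else 0 := by
        rw [← Finset.mul_sum, Finset.sum_offDiag_eq_sum_sum_ite]

end Rademacher

namespace Matrix

variable {ι K R : Type*} [DecidableEq K]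

def colourBlockDiag [Zero R] (col : ι → K) (B : Matrix ι ι R) : Matrix ι ι R :=
  of fun i j => if col i = col j then B i j else 0

theorem IsSymm.colourBlockDiag [Zero R] {B : Matrix ι ι R} (hB : B.IsSymm) (col : ι → K) :
    (B.colourBlockDiag col).IsSymm := by
  ext i j
  simp only [Matrix.colourBlockDiag, transpose_apply, of_apply, eq_comm (a := col j), hB.apply]

theorem sum_dotProduct_mulVec_eq_colourBlockDiag [Fintype ι] [Fintype K] [CommSemiring R]
    (B : Matrix ι ι R) (col : ι → K) {v : K → ι → R} (hv : ∀ k i, col i ≠ k → v k i = 0) :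
    ∑ k, v k ⬝ᵥ B *ᵥ v k =
      (fun i => v (col i) i) ⬝ᵥ B.colourBlockDiag col *ᵥ fun i => v (col i) i := by
  simp only [dotProduct, mulVec, Finset.mul_sum]
  rw [Finset.sum_comm]
  refine Finset.sum_congr rfl fun i _ => ?_
  rw [Finset.sum_comm]
  refine Finset.sum_congr rfl fun j _ => ?_
  rw [Finset.sum_eq_single (col i) (fun k _ hk => by rw [hv k i (Ne.symm hk), zero_mul])
    (by simp)]
  by_cases h : col i = col j
  · simp [colourBlockDiag, h]
  · simp [colourBlockDiag, h, hv (col i) j (Ne.symm h)]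

end Matrix

theorem stmt_8_general {n : ℕ} (B : Matrix (Fin n) (Fin n) ℝ) (hB : B.IsSymm)
    {K : Type*} [Fintype K] [DecidableEq K] (col : Fin n → K)
    {Ω : Type*} [MeasurableSpace Ω] (μ : Measure Ω)
    (V : K → Ω → Fin n → ℝ)
    (hmeas : ∀ k i, Measurable fun ω => V k ω i)
    (hsupp : ∀ k i, col i ≠ k → ∀ ω, V k ω i = 0)
    (hindep : iIndepFun
      (fun (p : K × Fin n) ω => V p.1 ω p.2) μ)
    (hrad : ∀ i, ∀ᵐ ω ∂μ, V (col i) ω i = 1 ∨ V (col i) ω i = -1)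
    (hmean : ∀ i, ∫ ω, V (col i) ω i ∂μ = 0) :
    variance (fun ω => ∑ k : K, dotProduct (V k ω) (B.mulVec (V k ω))) μ =
      2 * ∑ i, ∑ j, (if i ≠ j ∧ col i = col j then (B i j) ^ 2 else 0) ∧
    2 * ∑ i, ∑ j, (if i ≠ j ∧ col i = col j then (B i j) ^ 2 else 0) ≤
      2 * ∑ i, ∑ j, (if i ≠ j then (B i j) ^ 2 else 0) := by
  have hest : (fun ω => ∑ k, V k ω ⬝ᵥ B *ᵥ V k ω) = fun ω =>
      (fun i => V (col i) ω i) ⬝ᵥ B.colourBlockDiag col *ᵥ fun i => V (col i) ω i :=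
    funext fun ω => B.sum_dotProduct_mulVec_eq_colourBlockDiag col fun k i h => hsupp k i h ω
  have hind : iIndepFun (fun i ω => V (col i) ω i) μ :=
    hindep.precomp (g := fun i => (col i, i)) fun _ _ h => congrArg Prod.snd h
  constructor
  · rw [hest, variance_dotProduct_mulVec_rademacher (hB.colourBlockDiag col) hind
      (fun i => hmeas (col i) i) hrad hmean]
    congr 1
    refine Finset.sum_congr rfl fun i _ => Finset.sum_congr rfl fun j _ => ?_
    by_cases h : col i = col j <;> simp [Matrix.colourBlockDiag, h]
  · gcongr with i _ j _
    split_ifs with hcol hij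
    exacts [le_rfl, absurd hcol.1 hij, sq_nonneg _, le_rfl]

/-- the variance of the coloured Hutchinson estimator
`∑_c (V^c)ᵀ B V^c` equals `2 ∑_c ∑_{i≠j ∈ c} B_{ij}²`, which is at most the variance
`2 ∑_{i≠j} B_{ij}²` of the uncoloured Hutchinson estimator.  The partition is encoded
by a surjective colouring `col : Fin n → K`. -/
theorem stmt_8 {n : ℕ} (B : Matrix (Fin n) (Fin n) ℝ) (hB : B.IsSymm)
    {K : Type*} [Fintype K] [DecidableEq K] (col : Fin n → K) (hcol : Function.Surjective col)
    {Ω : Type*} [MeasurableSpace Ω] (μ : Measure Ω) [IsProbabilityMeasure μ]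
    (V : K → Ω → Fin n → ℝ)
    (hmeas : ∀ k i, Measurable fun ω => V k ω i)
    (hsupp : ∀ k i, col i ≠ k → ∀ ω, V k ω i = 0)
    (hindep : iIndepFun
      (fun (p : K × Fin n) ω => V p.1 ω p.2) μ)
    (hrad : ∀ i, ∀ᵐ ω ∂μ, V (col i) ω i = 1 ∨ V (col i) ω i = -1)
    (hmean : ∀ i, ∫ ω, V (col i) ω i ∂μ = 0) :
    variance (fun ω => ∑ k : K, dotProduct (V k ω) (B.mulVec (V k ω))) μ =
      2 * ∑ i, ∑ j, (if i ≠ j ∧ col i = col j then (B i j) ^ 2 else 0) ∧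
    2 * ∑ i, ∑ j, (if i ≠ j ∧ col i = col j then (B i j) ^ 2 else 0) ≤
      2 * ∑ i, ∑ j, (if i ≠ j then (B i j) ^ 2 else 0) :=
  stmt_8_general B hB col μ V hmeas hsupp hindep hrad hmean
end

section
/- Let A be symmetric positive definite and H symmetric positive semidefinite n×n matrices. Then the condition number of the preconditioned matrix A^{-1/2}(A + H)A^{-1/2} is at most 1 + tr(A^{-1}H); in particular, if tr(A^{-1}H) is bounded independently of n, then so is the condition number of the preconditioned system. -/
/-!
Writing `A = S * S`, the preconditioned matrix is `S⁻¹ (S S + H) S⁻¹ = 1 + P` with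
`P = S⁻¹ H S⁻¹` positive semidefinite and `tr P = tr (A⁻¹ H)`. The eigenvalues of `P` are
nonnegative and sum to `tr P`, so every eigenvalue of `1 + P` lies in `[1, 1 + tr P]`, and the
ratio of any two of them is at most `1 + tr P`.
-/

open Matrix

theorem spectrum.sub_one_mem_of_mem_one_add {R A : Type*} [CommRing R] [Ring A] [Algebra R A]
    {a : A} {μ : R} (hμ : μ ∈ spectrum R (1 + a)) : μ - 1 ∈ spectrum R a := by
  rw [← spectrum.add_mem_add_iff (s := (1 : R)), map_one, sub_add_cancel]
  exact hμ

namespace Matrix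

variable {m : Type*} [Fintype m] [DecidableEq m]

theorem PosSemidef.mem_Icc_trace_of_mem_spectrum {P : Matrix m m ℝ} (hP : P.PosSemidef)
    {μ : ℝ} (hμ : μ ∈ spectrum ℝ P) : μ ∈ Set.Icc 0 P.trace := by
  obtain ⟨i, rfl⟩ := hP.isHermitian.spectrum_real_eq_range_eigenvalues ▸ hμ
  refine ⟨hP.eigenvalues_nonneg i, ?_⟩
  rw [hP.isHermitian.trace_eq_sum_eigenvalues]
  exact Finset.single_le_sum (fun j _ ↦ hP.eigenvalues_nonneg j) (Finset.mem_univ i)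

theorem PosSemidef.mem_Icc_of_mem_spectrum_one_add {P : Matrix m m ℝ} (hP : P.PosSemidef)
    {μ : ℝ} (hμ : μ ∈ spectrum ℝ (1 + P)) : μ ∈ Set.Icc 1 (1 + P.trace) := by
  obtain ⟨h₀, h₁⟩ := hP.mem_Icc_trace_of_mem_spectrum (spectrum.sub_one_mem_of_mem_one_add hμ)
  constructor <;> linarith

theorem inv_mul_mul_self_add_mul_inv {R : Type*} [CommRing R] {S : Matrix m m R}
    (hS : IsUnit S.det) (H : Matrix m m R) :
    S⁻¹ * (S * S + H) * S⁻¹ = 1 + S⁻¹ * H * S⁻¹ := by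
  rw [Matrix.mul_add, Matrix.add_mul, ← Matrix.mul_assoc, nonsing_inv_mul S hS, Matrix.one_mul,
    mul_nonsing_inv S hS]

theorem trace_inv_mul_mul_inv {R : Type*} [CommRing R] (S H : Matrix m m R) :
    (S⁻¹ * H * S⁻¹).trace = ((S * S)⁻¹ * H).trace := by
  rw [trace_mul_cycle, ← mul_inv_rev]

end Matrix

theorem div_le_of_mem_Icc_one {μ ν c : ℝ} (hμ : μ ∈ Set.Icc 1 c) (hν : ν ∈ Set.Icc 1 c) :
    μ / ν ≤ c :=
  calc μ / ν ≤ μ / 1 := div_le_div_of_nonneg_left (by linarith [hμ.1]) zero_lt_one hν.1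
    _ = μ := div_one μ
    _ ≤ c := hμ.2

theorem stmt_14_general {n : ℕ} (A H S : Matrix (Fin n) (Fin n) ℝ)
    (hH : H.PosSemidef) (hS : S.PosDef) (hSA : S * S = A) :
    ∀ μ ∈ spectrum ℝ (S⁻¹ * (A + H) * S⁻¹), ∀ ν ∈ spectrum ℝ (S⁻¹ * (A + H) * S⁻¹),
      μ / ν ≤ 1 + (A⁻¹ * H).trace := by
  have hP : (S⁻¹ * H * S⁻¹).PosSemidef := by
    simpa only [hS.isHermitian.inv.eq] using hH.mul_mul_conjTranspose_same S⁻¹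
  have hconj : S⁻¹ * (A + H) * S⁻¹ = 1 + S⁻¹ * H * S⁻¹ := by
    rw [← hSA]
    exact inv_mul_mul_self_add_mul_inv (isUnit_iff_ne_zero.mpr hS.det_pos.ne') H
  rw [hconj, ← hSA, ← trace_inv_mul_mul_inv]
  intro μ hμ ν hν
  exact div_le_of_mem_Icc_one (hP.mem_Icc_of_mem_spectrum_one_add hμ)
    (hP.mem_Icc_of_mem_spectrum_one_add hν)

/-- for A symmetric positive definite and H symmetric positive
semidefinite, the condition number (ratio of any two eigenvalues, in particular of the
largest and smallest) of the preconditioned matrix `A^{-1/2}(A+H)A^{-1/2}` is at most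
`1 + tr(A⁻¹H)`. -/
theorem stmt_14 {n : ℕ} (A H S : Matrix (Fin n) (Fin n) ℝ)
    (hA : A.PosDef) (hH : H.PosSemidef) (hS : S.PosDef) (hSA : S * S = A) :
    ∀ μ ∈ spectrum ℝ (S⁻¹ * (A + H) * S⁻¹), ∀ ν ∈ spectrum ℝ (S⁻¹ * (A + H) * S⁻¹),
      μ / ν ≤ 1 + (A⁻¹ * H).trace :=
  stmt_14_general A H S hH hS hSA
end
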